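/- Let A1, A2 ∈ ℂ^{n×n}, F1, F2 ∈ ℂ^{p×p}, C1, C2 ∈ ℂ^{n×p}. The coupled Sylvester equations A1X1 + A2^#X2 - (X1F1 + X2^#F2) = C1 and A1^#X2 + A2X1 - (X1^#F2 + X2F1) = C2 have exactly one solution (X1, X2) with X1, X2 ∈ ℂ^{n×p} if and only if the spectra of lift(A1,A2) and lift(F1,F2) are disjoint, i.e., no eigenvalue of the 2n×2n matrix lift(A1,A2) is an eigenvalue of the 2p×2p matrix lift(F1,F2). -/

import Mathlib

open Matrix Polynomial

/-- Entrywise complex conjugate of a complex matrix. -/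
noncomputable def mconj {n m : Type*} (M : Matrix n m ℂ) : Matrix n m ℂ :=
  M.map (starRingEnd ℂ)

/-- The complex lifting `lift(M1,M2) = [[M1, M2^#],[M2, M1^#]]`. -/
noncomputable def clift {n m : Type*} (M1 M2 : Matrix n m ℂ) :
    Matrix (n ⊕ n) (m ⊕ m) ℂ :=
  Matrix.fromBlocks M1 (mconj M2) M2 (mconj M1)

set_option linter.unusedSectionVars false
set_option maxHeartbeats 1000000

variable {N P Q : Type*} [Fintype N] [DecidableEq N] [Fintype P] [DecidableEq P]


variable {N P Q : Type*} [Fintype N] [DecidableEq N] [Fintype P] [DecidableEq P]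

lemma my_eval_charpoly (M : Matrix N N ℂ) (μ : ℂ) :
    (M.charpoly).eval μ = (μ • (1 : Matrix N N ℂ) - M).det := by
  have : (M.charpoly).eval μ = ((charmatrix M).map (evalRingHom μ)).det := by
    rw [Matrix.charpoly]
    exact (evalRingHom μ).map_det _
  rw [this]
  congr 1
  ext i j
  by_cases h : i = j
  · subst h
    simp [charmatrix_apply_eq, Matrix.one_apply]
  · simp [charmatrix_apply_ne _ _ _ h, Matrix.one_apply_ne h]

lemma my_mem_spectrum_iff (M : Matrix N N ℂ) (μ : ℂ) :
    μ ∈ spectrum ℂ M ↔ (μ • (1 : Matrix N N ℂ) - M).det = 0 := by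
  rw [spectrum.mem_iff, Algebra.algebraMap_eq_smul_one]
  rw [Matrix.isUnit_iff_isUnit_det, isUnit_iff_ne_zero, not_ne_iff]

lemma my_mem_spectrum_iff_eval (M : Matrix N N ℂ) (μ : ℂ) :
    μ ∈ spectrum ℂ M ↔ (M.charpoly).eval μ = 0 := by
  rw [my_mem_spectrum_iff, my_eval_charpoly]

lemma right_eig (M : Matrix N N ℂ) (μ : ℂ) (h : μ ∈ spectrum ℂ M) :
    ∃ v : N → ℂ, v ≠ 0 ∧ M.mulVec v = μ • v := by
  rw [my_mem_spectrum_iff] at h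
  obtain ⟨v, hv, hv0⟩ := (Matrix.exists_mulVec_eq_zero_iff).mpr h
  refine ⟨v, hv, ?_⟩
  rw [Matrix.sub_mulVec, sub_eq_zero] at hv0
  rw [← hv0, Matrix.smul_mulVec, Matrix.one_mulVec]

lemma left_eig (M : Matrix N N ℂ) (μ : ℂ) (h : μ ∈ spectrum ℂ M) :
    ∃ w : N → ℂ, w ≠ 0 ∧ Mᵀ.mulVec w = μ • w := by
  apply right_eig
  rw [my_mem_spectrum_iff] at h ⊢
  rw [← Matrix.det_transpose] at h
  simpa using h


lemma aeval_comm (A : Matrix N N ℂ) (F : Matrix P P ℂ) (Z : Matrix N P ℂ)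
    (h : A * Z = Z * F) (q : ℂ[X]) : (aeval A q) * Z = Z * (aeval F q) := by
  induction q using Polynomial.induction_on with
  | C c =>
      simp only [aeval_C]
      rw [Algebra.algebraMap_eq_smul_one, Algebra.algebraMap_eq_smul_one,
        Matrix.smul_mul, Matrix.mul_smul, Matrix.one_mul, Matrix.mul_one]
  | add q r hq hr =>
      simp only [map_add, Matrix.add_mul, Matrix.mul_add, hq, hr]
  | monomial k c hk =>
      have e1 : (C c * X ^ (k + 1) : ℂ[X]) = (C c * X ^ k) * X := by ring
      simp only [e1, _root_.map_mul, aeval_X] at hk ⊢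
      rw [Matrix.mul_assoc, h, ← Matrix.mul_assoc, hk, Matrix.mul_assoc]

lemma syl_inj (A : Matrix N N ℂ) (F : Matrix P P ℂ) [Nonempty P]
    (hdisj : ∀ μ ∈ spectrum ℂ A, μ ∉ spectrum ℂ F)
    (Z : Matrix N P ℂ) (h : A * Z = Z * F) : Z = 0 := by
  set q := F.charpoly with hq
  have hZq : (aeval A q) * Z = 0 := by
    rw [aeval_comm A F Z h q, Matrix.aeval_self_charpoly, Matrix.mul_zero]
  have hunit : IsUnit (aeval A q) := by
    have h0 : (0 : ℂ) ∉ spectrum ℂ (aeval A q) := by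
      rw [spectrum.map_polynomial_aeval_of_degree_pos A q ?hdeg]
      · rintro ⟨μ, hμ, hev⟩
        exact hdisj μ hμ ((my_mem_spectrum_iff_eval F μ).mpr hev)
      case hdeg =>
        rw [hq, Matrix.charpoly_degree_eq_dim]
        exact_mod_cast Fintype.card_pos
    rw [spectrum.notMem_iff, map_zero, zero_sub, IsUnit.neg_iff] at h0
    exact h0
  obtain ⟨u, hu⟩ := hunit
  calc Z = (↑u⁻¹ * ↑u : Matrix N N ℂ) * Z := by rw [Units.inv_mul, Matrix.one_mul]
  _ = (↑u⁻¹ : Matrix N N ℂ) * ((aeval A q) * Z) := by rw [Matrix.mul_assoc, hu]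
  _ = 0 := by rw [hZq, Matrix.mul_zero]



@[simp] lemma mconj_apply (M : Matrix N P ℂ) (i j) :
    mconj M i j = (starRingEnd ℂ) (M i j) := rfl

@[simp] lemma mconj_mconj (M : Matrix N P ℂ) : mconj (mconj M) = M := by
  ext i j; simp

lemma mconj_add (M M' : Matrix N P ℂ) : mconj (M + M') = mconj M + mconj M' := by
  ext i j; simp

lemma mconj_sub (M M' : Matrix N P ℂ) : mconj (M - M') = mconj M - mconj M' := by
  ext i j; simp

@[simp] lemma mconj_zero : mconj (0 : Matrix N P ℂ) = 0 := by ext i j; simp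

lemma mconj_mul (M : Matrix N P ℂ) (M' : Matrix P Q ℂ) [Fintype P] :
    mconj (M * M') = mconj M * mconj M' := by
  ext i j
  simp [Matrix.mul_apply, map_sum]

lemma clift_zero : clift (0 : Matrix N P ℂ) 0 = 0 := by
  simp [clift, Matrix.fromBlocks_zero]

lemma clift_inj {M1 M2 D1 D2 : Matrix N P ℂ} (h : clift M1 M2 = clift D1 D2) :
    M1 = D1 ∧ M2 = D2 := by
  constructor
  · have := congrArg Matrix.toBlocks₁₁ h
    simpa [clift] using this
  · have := congrArg Matrix.toBlocks₂₁ h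
    simpa [clift] using this

noncomputable def Jmap {n m : Type*} (Z : Matrix (n ⊕ n) (m ⊕ m) ℂ) :
    Matrix (n ⊕ n) (m ⊕ m) ℂ :=
  Matrix.of fun i j => (starRingEnd ℂ) (Z (Sum.swap i) (Sum.swap j))

@[simp] lemma Jmap_apply {n m : Type*} (Z : Matrix (n ⊕ n) (m ⊕ m) ℂ) (i j) :
    Jmap Z i j = (starRingEnd ℂ) (Z (Sum.swap i) (Sum.swap j)) := rfl

@[simp] lemma Jmap_Jmap {n m : Type*} (Z : Matrix (n ⊕ n) (m ⊕ m) ℂ) :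
    Jmap (Jmap Z) = Z := by ext i j; simp

@[simp] lemma Jmap_clift (M1 M2 : Matrix N P ℂ) : Jmap (clift M1 M2) = clift M1 M2 := by
  ext (i | i) (j | j) <;> simp [clift, Matrix.fromBlocks]

lemma Jmap_add {n m : Type*} (Z W : Matrix (n ⊕ n) (m ⊕ m) ℂ) :
    Jmap (Z + W) = Jmap Z + Jmap W := by ext i j; simp

lemma Jmap_sub {n m : Type*} (Z W : Matrix (n ⊕ n) (m ⊕ m) ℂ) :
    Jmap (Z - W) = Jmap Z - Jmap W := by ext i j; simp

lemma Jmap_smul {n m : Type*} (c : ℂ) (Z : Matrix (n ⊕ n) (m ⊕ m) ℂ) :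
    Jmap (c • Z) = (starRingEnd ℂ) c • Jmap Z := by ext i j; simp

lemma Jmap_mul {n m k : Type*} [Fintype m] (M : Matrix (n ⊕ n) (m ⊕ m) ℂ)
    (Z : Matrix (m ⊕ m) (k ⊕ k) ℂ) : Jmap (M * Z) = Jmap M * Jmap Z := by
  ext i j
  simp only [Jmap_apply, Matrix.mul_apply, map_sum, _root_.map_mul]
  exact Fintype.sum_equiv (Equiv.sumComm m m) _ _ (fun x => by simp)

lemma Jmap_eq_self_iff {Z : Matrix (N ⊕ N) (P ⊕ P) ℂ} (h : Jmap Z = Z) :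
    Z = clift (Z.toBlocks₁₁) (Z.toBlocks₂₁) := by
  ext (i | i) (j | j)
  · rfl
  · exact ((congrFun (congrFun h (Sum.inl i)) (Sum.inr j)).symm).trans (by simp [clift, Matrix.fromBlocks, Matrix.toBlocks₂₁])
  · rfl
  · exact ((congrFun (congrFun h (Sum.inr i)) (Sum.inr j)).symm).trans (by simp [clift, Matrix.fromBlocks, Matrix.toBlocks₁₁])

lemma lift_eq (A1 A2 : Matrix N N ℂ) (F1 F2 : Matrix P P ℂ) (X1 X2 : Matrix N P ℂ) :
    clift A1 A2 * clift X1 X2 - clift X1 X2 * clift F1 F2 =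
      clift (A1 * X1 + mconj A2 * X2 - (X1 * F1 + mconj X2 * F2))
            (A2 * X1 + mconj A1 * X2 - (X2 * F1 + mconj X1 * F2)) := by
  ext (i | i) (j | j) <;>
    simp [clift, Matrix.fromBlocks_multiply, mconj_sub, mconj_add, mconj_mul,
      Matrix.sub_apply, Matrix.add_apply] <;> ring

lemma pair_iff (A1 A2 : Matrix N N ℂ) (F1 F2 : Matrix P P ℂ) (C1 C2 X1 X2 : Matrix N P ℂ) :
    (A1 * X1 + mconj A2 * X2 - (X1 * F1 + mconj X2 * F2) = C1 ∧
     mconj A1 * X2 + A2 * X1 - (mconj X1 * F2 + X2 * F1) = C2)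
    ↔ clift A1 A2 * clift X1 X2 - clift X1 X2 * clift F1 F2 = clift C1 C2 := by
  rw [lift_eq]
  constructor
  · rintro ⟨h1, h2⟩
    have e2 : A2 * X1 + mconj A1 * X2 - (X2 * F1 + mconj X1 * F2) = C2 := by
      rw [← h2]; abel
    rw [h1, e2]
  · intro h
    obtain ⟨h1, h2⟩ := clift_inj h
    exact ⟨h1, by rw [← h2]; abel⟩

lemma exists_Jfixed_kernel (A1 A2 : Matrix N N ℂ) (F1 F2 : Matrix P P ℂ) (μ : ℂ)
    (hA : μ ∈ spectrum ℂ (clift A1 A2)) (hF : μ ∈ spectrum ℂ (clift F1 F2)) :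
    ∃ W : Matrix (N ⊕ N) (P ⊕ P) ℂ, W ≠ 0 ∧ Jmap W = W ∧
      clift A1 A2 * W = W * clift F1 F2 := by
  obtain ⟨v, hv, hAv⟩ := right_eig _ μ hA
  obtain ⟨w, hw, hFw⟩ := left_eig _ μ hF
  set Z : Matrix (N ⊕ N) (P ⊕ P) ℂ := Matrix.of fun i j => v i * w j with hZdef
  have hZA : clift A1 A2 * Z = μ • Z := by
    ext i j
    simp only [Matrix.mul_apply, Matrix.smul_apply, hZdef, Matrix.of_apply, smul_eq_mul]
    calc ∑ k, clift A1 A2 i k * (v k * w j)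
        = (∑ k, clift A1 A2 i k * v k) * w j := by
          rw [Finset.sum_mul]; exact Finset.sum_congr rfl fun k _ => by ring
      _ = ((clift A1 A2).mulVec v i) * w j := rfl
      _ = μ * (v i * w j) := by rw [hAv]; simp [mul_assoc]
  have hZF : Z * clift F1 F2 = μ • Z := by
    ext i j
    simp only [Matrix.mul_apply, Matrix.smul_apply, hZdef, Matrix.of_apply, smul_eq_mul]
    calc ∑ k, (v i * w k) * clift F1 F2 k j
        = v i * ∑ k, (clift F1 F2)ᵀ j k * w k := by
          rw [Finset.mul_sum]; exact Finset.sum_congr rfl fun k _ => by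
            simp [Matrix.transpose_apply]; ring
      _ = v i * ((clift F1 F2)ᵀ.mulVec w j) := rfl
      _ = μ * (v i * w j) := by rw [hFw]; simp; ring
  have hker : clift A1 A2 * Z = Z * clift F1 F2 := by rw [hZA, hZF]
  have hkerJ : clift A1 A2 * Jmap Z = Jmap Z * clift F1 F2 := by
    have h' := congrArg Jmap hker
    rwa [Jmap_mul, Jmap_mul, Jmap_clift, Jmap_clift] at h'
  have hZ0 : Z ≠ 0 := by
    obtain ⟨i, hi⟩ := Function.ne_iff.mp hv
    obtain ⟨j, hj⟩ := Function.ne_iff.mp hw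
    intro h
    exact mul_ne_zero hi hj (by simpa [hZdef] using congrFun (congrFun h i) j)
  by_cases hc : Z + Jmap Z = 0
  · have hJZ : Jmap Z = -Z := by
      rw [eq_neg_iff_add_eq_zero, add_comm]; exact hc
    refine ⟨Complex.I • (Z - Jmap Z), ?_, ?_, ?_⟩
    · rw [hJZ, sub_neg_eq_add]
      intro h
      rcases smul_eq_zero.mp h with h | h
      · exact Complex.I_ne_zero h
      · rw [← two_smul ℂ] at h
        rcases smul_eq_zero.mp h with h | h
        · norm_num at h
        · exact hZ0 h
    · rw [Jmap_smul, Jmap_sub, Jmap_Jmap, Complex.conj_I]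
      rw [neg_smul, smul_sub, smul_sub, neg_sub]
    · rw [Matrix.mul_smul, Matrix.smul_mul, Matrix.mul_sub, Matrix.sub_mul, hker, hkerJ]
  · refine ⟨Z + Jmap Z, hc, ?_, ?_⟩
    · rw [Jmap_add, Jmap_Jmap, add_comm]
    · rw [Matrix.mul_add, Matrix.add_mul, hker, hkerJ]

noncomputable def sylMap (A : Matrix N N ℂ) (F : Matrix P P ℂ) :
    Matrix N P ℂ →ₗ[ℂ] Matrix N P ℂ where
  toFun Z := A * Z - Z * F
  map_add' Z W := by simp only [Matrix.mul_add, Matrix.add_mul]; abel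
  map_smul' c Z := by
    simp only [RingHom.id_apply, Matrix.mul_smul, Matrix.smul_mul, smul_sub]

lemma sylMap_bij (A : Matrix N N ℂ) (F : Matrix P P ℂ) [Nonempty P]
    (hdisj : ∀ μ ∈ spectrum ℂ A, μ ∉ spectrum ℂ F) :
    Function.Bijective (sylMap A F) := by
  have hinj : Function.Injective (sylMap A F) := by
    rw [injective_iff_map_eq_zero]
    intro Z hZ
    have h : A * Z = Z * F := by
      have h' : A * Z - Z * F = 0 := hZ
      rwa [sub_eq_zero] at h'
    exact syl_inj A F hdisj Z h
  exact ⟨hinj, (LinearMap.injective_iff_surjective).mp hinj⟩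

/-- the coupled Sylvester equations have exactly one solution iff the
spectra of `lift(A1,A2)` and `lift(F1,F2)` are disjoint. -/
theorem stmt_13 {n p : ℕ}
    (A1 A2 : Matrix (Fin n) (Fin n) ℂ) (F1 F2 : Matrix (Fin p) (Fin p) ℂ)
    (C1 C2 : Matrix (Fin n) (Fin p) ℂ) :
    (∃! X : Matrix (Fin n) (Fin p) ℂ × Matrix (Fin n) (Fin p) ℂ,
      A1 * X.1 + mconj A2 * X.2 - (X.1 * F1 + mconj X.2 * F2) = C1 ∧
      mconj A1 * X.2 + A2 * X.1 - (mconj X.1 * F2 + X.2 * F1) = C2)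
    ↔ ∀ μ ∈ spectrum ℂ (clift A1 A2), μ ∉ spectrum ℂ (clift F1 F2) := by
  constructor
  · intro hex μ hμA hμF
    exfalso
    obtain ⟨W, hW0, hWJ, hWker⟩ := exists_Jfixed_kernel A1 A2 F1 F2 μ hμA hμF
    have hWc := Jmap_eq_self_iff hWJ
    set Y1 := W.toBlocks₁₁ with hY1def
    set Y2 := W.toBlocks₂₁ with hY2def
    have hlift : clift A1 A2 * clift Y1 Y2 - clift Y1 Y2 * clift F1 F2 = clift 0 0 := by
      rw [← hWc, hWker, sub_self, clift_zero]
    have hpair := (pair_iff A1 A2 F1 F2 0 0 Y1 Y2).mpr hlift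
    obtain ⟨X, hX, hu⟩ := hex
    have hX' := hu (X.1 + Y1, X.2 + Y2) ?_
    · have h1 : X.1 + Y1 = X.1 := congrArg Prod.fst hX'
      have h2 : X.2 + Y2 = X.2 := congrArg Prod.snd hX'
      rw [add_eq_left] at h1 h2
      exact hW0 (by rw [hWc, h1, h2, clift_zero])
    · constructor
      · show A1 * (X.1 + Y1) + mconj A2 * (X.2 + Y2)
            - ((X.1 + Y1) * F1 + mconj (X.2 + Y2) * F2) = C1
        rw [mconj_add, Matrix.mul_add, Matrix.mul_add, Matrix.add_mul, Matrix.add_mul]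
        have e : A1 * X.1 + A1 * Y1 + (mconj A2 * X.2 + mconj A2 * Y2)
              - (X.1 * F1 + Y1 * F1 + (mconj X.2 * F2 + mconj Y2 * F2))
            = (A1 * X.1 + mconj A2 * X.2 - (X.1 * F1 + mconj X.2 * F2))
              + (A1 * Y1 + mconj A2 * Y2 - (Y1 * F1 + mconj Y2 * F2)) := by abel
        rw [e, hX.1, hpair.1, add_zero]
      · show mconj A1 * (X.2 + Y2) + A2 * (X.1 + Y1)
            - (mconj (X.1 + Y1) * F2 + (X.2 + Y2) * F1) = C2
        rw [mconj_add, Matrix.mul_add, Matrix.mul_add, Matrix.add_mul, Matrix.add_mul]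
        have e : mconj A1 * X.2 + mconj A1 * Y2 + (A2 * X.1 + A2 * Y1)
              - (mconj X.1 * F2 + mconj Y1 * F2 + (X.2 * F1 + Y2 * F1))
            = (mconj A1 * X.2 + A2 * X.1 - (mconj X.1 * F2 + X.2 * F1))
              + (mconj A1 * Y2 + A2 * Y1 - (mconj Y1 * F2 + Y2 * F1)) := by abel
        rw [e, hX.2, hpair.2, add_zero]
  · intro hdisj
    by_cases hp : p = 0
    · subst hp
      refine ⟨(0, 0), ⟨Subsingleton.elim _ _, Subsingleton.elim _ _⟩, fun Y _ => ?_⟩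
      exact Prod.ext (Subsingleton.elim _ _) (Subsingleton.elim _ _)
    · have hne : Nonempty (Fin p ⊕ Fin p) := ⟨Sum.inl ⟨0, Nat.pos_of_ne_zero hp⟩⟩
      have hbij := sylMap_bij (clift A1 A2) (clift F1 F2) hdisj
      obtain ⟨Z, hZ⟩ := hbij.2 (clift C1 C2)
      have hTZ : clift A1 A2 * Z - Z * clift F1 F2 = clift C1 C2 := hZ
      set Z' := (2⁻¹ : ℂ) • (Z + Jmap Z) with hZ'def
      have hTJZ : clift A1 A2 * Jmap Z - Jmap Z * clift F1 F2 = clift C1 C2 := by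
        have h' := congrArg Jmap hTZ
        rwa [Jmap_sub, Jmap_mul, Jmap_mul, Jmap_clift, Jmap_clift, Jmap_clift] at h'
      have hTZ' : clift A1 A2 * Z' - Z' * clift F1 F2 = clift C1 C2 := by
        rw [hZ'def, Matrix.mul_smul, Matrix.smul_mul, ← smul_sub, Matrix.mul_add,
          Matrix.add_mul]
        have e : clift A1 A2 * Z + clift A1 A2 * Jmap Z
              - (Z * clift F1 F2 + Jmap Z * clift F1 F2)
            = (clift A1 A2 * Z - Z * clift F1 F2)
              + (clift A1 A2 * Jmap Z - Jmap Z * clift F1 F2) := by abel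
        rw [e, hTZ, hTJZ, ← two_smul ℂ, smul_smul]
        norm_num
      have hJZ' : Jmap Z' = Z' := by
        rw [hZ'def, Jmap_smul, Jmap_add, Jmap_Jmap]
        have hc2 : (starRingEnd ℂ) (2⁻¹ : ℂ) = 2⁻¹ := by
          rw [map_inv₀]; norm_num [Complex.conj_ofNat]
        rw [hc2, add_comm]
      have hc := Jmap_eq_self_iff hJZ'
      refine ⟨(Z'.toBlocks₁₁, Z'.toBlocks₂₁), ?_, ?_⟩
      · exact (pair_iff A1 A2 F1 F2 C1 C2 _ _).mpr (by rw [← hc]; exact hTZ')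
      · rintro ⟨Y1, Y2⟩ hY
        have hYl := (pair_iff A1 A2 F1 F2 C1 C2 Y1 Y2).mp hY
        have heq : clift Y1 Y2 = Z' := by
          apply hbij.1
          show clift A1 A2 * clift Y1 Y2 - clift Y1 Y2 * clift F1 F2
              = clift A1 A2 * Z' - Z' * clift F1 F2
          rw [hYl, hTZ']
        obtain ⟨e1, e2⟩ := clift_inj (heq.trans hc)
        exact Prod.ext e1 e2
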